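/- arXiv:2507.12627 — 2 statements merged into one kernel-verified Lean document; each statement's English description precedes it below -/
import Mathlib

section
/- For σ ∈ ℝ, the L²(ℝ³)-norm of the weighted coherent state is comparable to ⟨p⟩^σ uniformly in ℏ ∈ (0,1] and q: ‖⟨ℏ∇⟩^σ φ^ℏ_{(q,p)}‖_{L²_x}² = (πℏ)^{-3/2} ‖⟨ξ⟩^σ e^{-|p-ξ|²/(2ℏ)}‖_{L²_ξ}² ∼ ⟨p⟩^{2σ}, with implicit constants depending only on σ. -/
/-!
The Fourier transform of the coherent state is again a Gaussian,
`|𝓕φ(ξ)|² = (πℏ)^{-3/2} (2πℏ)³ e^{-|p-ℏξ|²/ℏ}`, so the substitution `ξ ↦ ℏξ` gives the identity.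
For the comparison substitute `ξ = p + √ℏ v`: the right-hand side becomes
`π^{-3/2} ∫ ⟨p + √ℏ v⟩^{2σ} e^{-|v|²} dv`, and Peetre's inequality together with `√ℏ ≤ 1` gives
`2^{-|σ|} ⟨p⟩^{2σ} ⟨v⟩^{-2|σ|} ≤ ⟨p + √ℏ v⟩^{2σ} ≤ 2^{|σ|} ⟨p⟩^{2σ} ⟨v⟩^{2|σ|}`.
Integrating against `e^{-|v|²}` bounds it by `⟨p⟩^{2σ}` times Gaussian moments independent of `ℏ`.
-/

open MeasureTheory
noncomputable section

abbrev E3 := EuclideanSpace ℝ (Fin 3)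

/-- The coherent state `φ^ℏ_{(q,p)}(x) = (πℏ)^{-3/4} e^{-|x-q|²/(2ℏ)} e^{i(x-q)·p/ℏ}`. -/
def coherent (ℏ : ℝ) (q p x : E3) : ℂ :=
  (((Real.pi * ℏ) ^ (-(3 : ℝ) / 4) : ℝ) : ℂ) *
    Complex.exp (-((‖x - q‖ ^ 2 / (2 * ℏ) : ℝ) : ℂ)) *
    Complex.exp (Complex.I * ((inner ℝ (x - q) p : ℝ) : ℂ) / (ℏ : ℂ))

section Peetre

variable {V : Type*} [SeminormedAddCommGroup V]

theorem one_add_norm_add_sq_le (a b : V) :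
    1 + ‖a + b‖ ^ 2 ≤ 2 * (1 + ‖a‖ ^ 2) * (1 + ‖b‖ ^ 2) := by
  nlinarith [norm_add_le a b, norm_nonneg (a + b), sq_nonneg (‖a‖ - ‖b‖),
    mul_nonneg (sq_nonneg ‖a‖) (sq_nonneg ‖b‖)]

theorem one_add_norm_add_sq_rpow_le (σ : ℝ) (a b : V) :
    (1 + ‖a + b‖ ^ 2) ^ σ ≤ 2 ^ |σ| * (1 + ‖a‖ ^ 2) ^ σ * (1 + ‖b‖ ^ 2) ^ |σ| := by
  rcases le_or_gt 0 σ with hσ | hσ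
  · rw [abs_of_nonneg hσ, ← Real.mul_rpow (by positivity) (by positivity),
      ← Real.mul_rpow (by positivity) (by positivity)]
    exact Real.rpow_le_rpow (by positivity) (one_add_norm_add_sq_le a b) hσ
  · -- raise `1 + ‖a‖² ≤ 2 (1 + ‖a + b‖²) (1 + ‖b‖²)` to the negative power `σ`
    have h := one_add_norm_add_sq_le (a + b) (-b)
    rw [add_neg_cancel_right, norm_neg] at h
    have h' := Real.rpow_le_rpow_of_nonpos (by positivity) h hσ.le
    rw [Real.mul_rpow (by positivity) (by positivity),
      Real.mul_rpow (by positivity) (by positivity)] at h'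
    rw [abs_of_neg hσ, Real.rpow_neg (by positivity), Real.rpow_neg (by positivity),
      show ∀ x y z : ℝ, x⁻¹ * y * z⁻¹ = y / (x * z) from fun _ _ _ ↦ by ring,
      le_div_iff₀ (by positivity)]
    linarith

theorem one_add_norm_sq_rpow_le (σ : ℝ) (a b : V) :
    (1 + ‖a‖ ^ 2) ^ σ ≤ 2 ^ |σ| * (1 + ‖a + b‖ ^ 2) ^ σ * (1 + ‖b‖ ^ 2) ^ |σ| := by
  simpa using one_add_norm_add_sq_rpow_le σ (a + b) (-b)

variable [NormedSpace ℝ V] {c : ℝ}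

theorem one_add_norm_add_smul_sq_rpow_le (σ : ℝ) (hc : ‖c‖ ≤ 1) (p v : V) :
    (1 + ‖p + c • v‖ ^ 2) ^ σ ≤ 2 ^ |σ| * (1 + ‖p‖ ^ 2) ^ σ * (1 + ‖v‖ ^ 2) ^ |σ| :=
  (one_add_norm_add_sq_rpow_le σ p (c • v)).trans <| by
    gcongr
    exact (norm_smul_le c v).trans (mul_le_of_le_one_left (norm_nonneg v) hc)

theorem le_one_add_norm_add_smul_sq_rpow (σ : ℝ) (hc : ‖c‖ ≤ 1) (p v : V) :
    2 ^ (-|σ|) * (1 + ‖p‖ ^ 2) ^ σ * (1 + ‖v‖ ^ 2) ^ (-|σ|) ≤ (1 + ‖p + c • v‖ ^ 2) ^ σ := by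
  have h : (1 + ‖p‖ ^ 2) ^ σ ≤ 2 ^ |σ| * (1 + ‖p + c • v‖ ^ 2) ^ σ * (1 + ‖v‖ ^ 2) ^ |σ| :=
    (one_add_norm_sq_rpow_le σ p (c • v)).trans <| by
      gcongr
      exact (norm_smul_le c v).trans (mul_le_of_le_one_left (norm_nonneg v) hc)
  rw [Real.rpow_neg (by positivity), Real.rpow_neg (by positivity),
    show ∀ x y z : ℝ, x⁻¹ * y * z⁻¹ = y / (x * z) from fun _ _ _ ↦ by ring,
    div_le_iff₀ (by positivity)]
  linarith

end Peetre

theorem one_add_rpow_le_mul_exp {τ x : ℝ} (hτ : 0 ≤ τ) (hx : 0 ≤ x) :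
    (1 + x) ^ τ ≤ (1 + 2 * τ) ^ τ * Real.exp (x / 2) := by
  set k := 1 + 2 * τ
  have hk : 0 < k := by positivity
  have hlin : 1 + x ≤ k * Real.exp (x / k) := by
    have := Real.add_one_le_exp (x / k)
    calc 1 + x ≤ k * (x / k + 1) := by field_simp; linarith
      _ ≤ k * Real.exp (x / k) := by gcongr
  calc (1 + x) ^ τ ≤ (k * Real.exp (x / k)) ^ τ := Real.rpow_le_rpow (by positivity) hlin hτ
    _ = k ^ τ * Real.exp (τ * x / k) := by
      rw [Real.mul_rpow hk.le (Real.exp_nonneg _), ← Real.exp_mul]; ring_nf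
    _ ≤ k ^ τ * Real.exp (x / 2) := by
      refine mul_le_mul_of_nonneg_left (Real.exp_le_exp.2 ?_) (by positivity)
      rw [div_le_div_iff₀ hk two_pos]
      nlinarith

section GaussianIntegrals

variable {V : Type*} [NormedAddCommGroup V] [InnerProductSpace ℝ V] [FiniteDimensional ℝ V]
  [MeasurableSpace V] [BorelSpace V] {c : ℝ}

theorem integrable_exp_neg_mul_sq_norm {b : ℝ} (hb : 0 < b) :
    Integrable (fun v : V ↦ Real.exp (-b * ‖v‖ ^ 2)) :=
  -- a non-integrable function would have integral `0`
  Integrable.of_integral_ne_zero <| by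
    rw [GaussianFourier.integral_rexp_neg_mul_sq_norm hb]; positivity

theorem integrable_one_add_norm_sq_rpow_mul_exp_neg_norm_sq (s : ℝ) :
    Integrable (fun v : V ↦ (1 + ‖v‖ ^ 2) ^ s * Real.exp (-‖v‖ ^ 2)) := by
  refine ((integrable_exp_neg_mul_sq_norm (V := V) (half_pos one_pos)).const_mul
    ((1 + 2 * |s|) ^ |s|)).mono' (by fun_prop) (.of_forall fun v ↦ ?_)
  have hv : 1 ≤ 1 + ‖v‖ ^ 2 := le_add_of_nonneg_right (by positivity)
  rw [Real.norm_of_nonneg (by positivity)]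
  calc (1 + ‖v‖ ^ 2) ^ s * Real.exp (-‖v‖ ^ 2)
      ≤ (1 + ‖v‖ ^ 2) ^ |s| * Real.exp (-‖v‖ ^ 2) := by
        gcongr ?_ * _
        exact Real.rpow_le_rpow_of_exponent_le hv (le_abs_self s)
    _ ≤ (1 + 2 * |s|) ^ |s| * Real.exp (‖v‖ ^ 2 / 2) * Real.exp (-‖v‖ ^ 2) := by
        gcongr
        exact one_add_rpow_le_mul_exp (abs_nonneg s) (by positivity)
    _ = (1 + 2 * |s|) ^ |s| * Real.exp (-(1 / 2) * ‖v‖ ^ 2) := by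
        rw [mul_assoc, ← Real.exp_add]; ring_nf

theorem integral_one_add_norm_sq_rpow_mul_exp_neg_norm_sq_pos (s : ℝ) :
    0 < ∫ v : V, (1 + ‖v‖ ^ 2) ^ s * Real.exp (-‖v‖ ^ 2) := by
  rw [integral_pos_iff_support_of_nonneg (fun v ↦ by positivity)
    (integrable_one_add_norm_sq_rpow_mul_exp_neg_norm_sq s)]
  have : Function.support (fun v : V ↦ (1 + ‖v‖ ^ 2) ^ s * Real.exp (-‖v‖ ^ 2)) = Set.univ :=
    Function.support_eq_univ fun v ↦ by positivity
  rw [this]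
  exact isOpen_univ.measure_pos volume Set.univ_nonempty

theorem integral_mul_exp_neg_norm_sub_sq_div (f : V → ℝ) (p : V) {t : ℝ} (ht : 0 < t) :
    ∫ ξ, f ξ * Real.exp (-‖p - ξ‖ ^ 2 / t)
      = t ^ ((Module.finrank ℝ V : ℝ) / 2) * ∫ v, f (p + √t • v) * Real.exp (-‖v‖ ^ 2) := by
  have hscale := Measure.integral_comp_smul_of_nonneg volume
    (fun u ↦ f (p + u) * Real.exp (-‖u‖ ^ 2 / t)) √t (hR := Real.sqrt_nonneg t)
  have hnorm (v : V) : -‖√t • v‖ ^ 2 / t = -‖v‖ ^ 2 := by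
    rw [norm_smul, mul_pow, Real.norm_eq_abs, sq_abs, Real.sq_sqrt ht.le]; field_simp
  have hpow : √t ^ Module.finrank ℝ V = t ^ ((Module.finrank ℝ V : ℝ) / 2) := by
    rw [Real.sqrt_eq_rpow, ← Real.rpow_natCast, ← Real.rpow_mul ht.le]; ring_nf
  simp only [hnorm, smul_eq_mul] at hscale
  rw [hscale, ← mul_assoc, hpow, mul_inv_cancel₀ (by positivity), one_mul,
    ← integral_add_left_eq_self (fun ξ ↦ f ξ * Real.exp (-‖p - ξ‖ ^ 2 / t)) p]
  simp

theorem integral_one_add_norm_add_smul_sq_rpow_mul_exp_le (σ : ℝ) (hc : ‖c‖ ≤ 1) (p : V) :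
    ∫ v, (1 + ‖p + c • v‖ ^ 2) ^ σ * Real.exp (-‖v‖ ^ 2)
      ≤ 2 ^ |σ| * (1 + ‖p‖ ^ 2) ^ σ * ∫ v : V, (1 + ‖v‖ ^ 2) ^ |σ| * Real.exp (-‖v‖ ^ 2) := by
  rw [← integral_const_mul]
  refine integral_mono_of_nonneg (.of_forall fun v ↦ by positivity)
    ((integrable_one_add_norm_sq_rpow_mul_exp_neg_norm_sq _).const_mul _) (.of_forall fun v ↦ ?_)
  dsimp only
  rw [← mul_assoc]
  gcongr
  exact one_add_norm_add_smul_sq_rpow_le σ hc p v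

theorem le_integral_one_add_norm_add_smul_sq_rpow_mul_exp (σ : ℝ) (hc : ‖c‖ ≤ 1) (p : V) :
    2 ^ (-|σ|) * (1 + ‖p‖ ^ 2) ^ σ * ∫ v : V, (1 + ‖v‖ ^ 2) ^ (-|σ|) * Real.exp (-‖v‖ ^ 2)
      ≤ ∫ v, (1 + ‖p + c • v‖ ^ 2) ^ σ * Real.exp (-‖v‖ ^ 2) := by
  have hint : Integrable (fun v : V ↦ (1 + ‖p + c • v‖ ^ 2) ^ σ * Real.exp (-‖v‖ ^ 2)) := by
    refine ((integrable_one_add_norm_sq_rpow_mul_exp_neg_norm_sq |σ|).const_mul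
      (2 ^ |σ| * (1 + ‖p‖ ^ 2) ^ σ)).mono' (by fun_prop) (.of_forall fun v ↦ ?_)
    rw [Real.norm_of_nonneg (by positivity), ← mul_assoc]
    gcongr
    exact one_add_norm_add_smul_sq_rpow_le σ hc p v
  rw [← integral_const_mul]
  refine integral_mono_of_nonneg (.of_forall fun v ↦ by positivity) hint (.of_forall fun v ↦ ?_)
  dsimp only
  rw [← mul_assoc]
  gcongr
  exact le_one_add_norm_add_smul_sq_rpow σ hc p v

end GaussianIntegrals

theorem integral_coherent_mul_cexp {ℏ : ℝ} (hℏ : 0 < ℏ) (q p ξ : E3) :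
    ∫ x : E3, coherent ℏ q p x * Complex.exp (-(Complex.I * ((inner ℝ x ξ : ℝ) : ℂ)))
      = (((Real.pi * ℏ) ^ (-(3 : ℝ) / 4) * (2 * Real.pi * ℏ) ^ ((3 : ℝ) / 2)
          * Real.exp (-‖p - ℏ • ξ‖ ^ 2 / (2 * ℏ)) : ℝ) : ℂ)
        * Complex.exp (-(Complex.I * ((inner ℝ q ξ : ℝ) : ℂ))) := by
  set b : ℂ := (((2 * ℏ)⁻¹ : ℝ) : ℂ)
  have hb : 0 < b.re := by simp [b, hℏ]
  set w : E3 := ℏ⁻¹ • p - ξ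
  have hintegrand (x : E3) :
      coherent ℏ q p x * Complex.exp (-(Complex.I * ((inner ℝ x ξ : ℝ) : ℂ)))
        = ((((Real.pi * ℏ) ^ (-(3 : ℝ) / 4) : ℝ) : ℂ)
            * Complex.exp (-(Complex.I * ((inner ℝ q ξ : ℝ) : ℂ))))
          * Complex.exp (-b * ‖x - q‖ ^ 2 + Complex.I * ((inner ℝ w (x - q) : ℝ) : ℂ)) := by
    have hw : inner ℝ w (x - q) = ℏ⁻¹ * inner ℝ (x - q) p - (inner ℝ x ξ - inner ℝ q ξ) := by
      simp only [w, inner_sub_left, inner_sub_right, real_inner_smul_left]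
      rw [real_inner_comm p x, real_inner_comm p q, real_inner_comm ξ x, real_inner_comm ξ q]
      ring
    simp only [coherent, mul_assoc, ← Complex.exp_add, hw, b]
    congr 2
    push_cast
    field_simp
    ring
  have hgauss := GaussianFourier.integral_cexp_neg_mul_sq_norm_add hb Complex.I w
  have hvol : (Real.pi : ℂ) / b = ((2 * Real.pi * ℏ : ℝ) : ℂ) := by
    simp only [b]; push_cast; field_simp
  have hexp : Complex.I ^ 2 * ((‖w‖ : ℂ)) ^ 2 / (4 * b)
      = ((-‖p - ℏ • ξ‖ ^ 2 / (2 * ℏ) : ℝ) : ℂ) := by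
    have : p - ℏ • ξ = ℏ • w := by
      simp only [w, smul_sub, smul_smul, mul_inv_cancel₀ hℏ.ne', one_smul]
    rw [this, norm_smul, Real.norm_of_nonneg hℏ.le, Complex.I_sq]
    simp only [b]; push_cast; field_simp; ring
  simp_rw [hintegrand, integral_const_mul]
  rw [integral_sub_right_eq_self
      (fun y ↦ Complex.exp (-b * ‖y‖ ^ 2 + Complex.I * ((inner ℝ w y : ℝ) : ℂ))) q,
    hgauss, hvol, hexp, finrank_euclideanSpace_fin,
    show ((3 : ℕ) : ℂ) / 2 = ((3 / 2 : ℝ) : ℂ) by push_cast; ring,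
    ← Complex.ofReal_cpow (by positivity), ← Complex.ofReal_exp]
  push_cast
  ring

theorem norm_integral_coherent_mul_cexp_sq {ℏ : ℝ} (hℏ : 0 < ℏ) (q p ξ : E3) :
    ‖∫ x : E3, coherent ℏ q p x * Complex.exp (-(Complex.I * ((inner ℝ x ξ : ℝ) : ℂ)))‖ ^ 2
      = (Real.pi * ℏ) ^ (-(3 : ℝ) / 2) * (2 * Real.pi * ℏ) ^ 3
        * Real.exp (-‖p - ℏ • ξ‖ ^ 2 / ℏ) := by
  have hsq {x : ℝ} (hx : 0 ≤ x) (y : ℝ) : (x ^ y) ^ 2 = x ^ (2 * y) := by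
    rw [← Real.rpow_natCast, ← Real.rpow_mul hx, mul_comm]; norm_num
  rw [integral_coherent_mul_cexp hℏ, norm_mul, Complex.norm_real, Complex.norm_exp]
  simp only [Complex.neg_re, Complex.mul_re, Complex.I_re, Complex.I_im, Complex.ofReal_re,
    Complex.ofReal_im, zero_mul, mul_zero, sub_zero, neg_zero, Real.exp_zero, mul_one]
  rw [Real.norm_of_nonneg (by positivity), mul_pow, mul_pow, hsq (by positivity),
    hsq (by positivity), ← Real.exp_nat_mul, show 2 * (-(3 : ℝ) / 4) = -3 / 2 by norm_num, show 2 * (3 / 2 : ℝ) = (3 : ℕ) by norm_num,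
    Real.rpow_natCast]
  push_cast
  ring_nf

theorem integral_weight_mul_norm_integral_coherent_mul_cexp_sq (σ : ℝ) {ℏ : ℝ} (hℏ : 0 < ℏ)
    (q p : E3) :
    (((2 * Real.pi) ^ 3 : ℝ))⁻¹ *
        ∫ ξ : E3, ((1 + ℏ ^ 2 * ‖ξ‖ ^ 2) ^ σ : ℝ) *
          ‖∫ x : E3, coherent ℏ q p x * Complex.exp (-(Complex.I * ((inner ℝ x ξ : ℝ) : ℂ)))‖ ^ 2
      = (Real.pi * ℏ) ^ (-(3 : ℝ) / 2) *
          ∫ ξ : E3, ((1 + ‖ξ‖ ^ 2) ^ σ : ℝ) * Real.exp (-‖p - ξ‖ ^ 2 / ℏ) := by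
  set g : E3 → ℝ := fun η ↦ (1 + ‖η‖ ^ 2) ^ σ * Real.exp (-‖p - η‖ ^ 2 / ℏ)
  have hintegrand (ξ : E3) :
      (1 + ℏ ^ 2 * ‖ξ‖ ^ 2) ^ σ *
          ‖∫ x : E3, coherent ℏ q p x * Complex.exp (-(Complex.I * ((inner ℝ x ξ : ℝ) : ℂ)))‖ ^ 2
        = ((Real.pi * ℏ) ^ (-(3 : ℝ) / 2) * (2 * Real.pi * ℏ) ^ 3) * g (ℏ • ξ) := by
    rw [norm_integral_coherent_mul_cexp_sq hℏ]
    simp only [g]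
    rw [norm_smul, Real.norm_of_nonneg hℏ.le, mul_pow ℏ]
    ring
  simp_rw [hintegrand, integral_const_mul]
  rw [Measure.integral_comp_smul_of_nonneg volume g ℏ (hR := hℏ.le), finrank_euclideanSpace_fin,
    smul_eq_mul]
  field_simp

/-- for `σ ∈ ℝ`, the `L²`-norm squared of `⟨ℏ∇⟩^σ φ^ℏ_{(q,p)}` (expressed via
Plancherel through the Fourier transform of the coherent state) equals
`(πℏ)^{-3/2} ‖⟨ξ⟩^σ e^{-|p-ξ|²/(2ℏ)}‖_{L²_ξ}²` and is comparable to `⟨p⟩^{2σ}` uniformly in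
`ℏ ∈ (0,1]` and `q`, with constants depending only on `σ`. -/
theorem weighted_coherent_state_norm (σ : ℝ) :
    ∃ c > (0 : ℝ), ∃ C > (0 : ℝ), ∀ ℏ : ℝ, 0 < ℏ → ℏ ≤ 1 → ∀ q p : E3,
      ((((2 * Real.pi) ^ 3 : ℝ))⁻¹ *
          ∫ ξ : E3, ((1 + ℏ ^ 2 * ‖ξ‖ ^ 2) ^ σ : ℝ) *
            ‖∫ x : E3, coherent ℏ q p x * Complex.exp (-(Complex.I * ((inner ℝ x ξ : ℝ) : ℂ)))‖ ^ 2
        = (Real.pi * ℏ) ^ (-(3 : ℝ) / 2) *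
            ∫ ξ : E3, ((1 + ‖ξ‖ ^ 2) ^ σ : ℝ) * Real.exp (-‖p - ξ‖ ^ 2 / ℏ)) ∧
      c * (1 + ‖p‖ ^ 2) ^ σ ≤
        (Real.pi * ℏ) ^ (-(3 : ℝ) / 2) *
          ∫ ξ : E3, ((1 + ‖ξ‖ ^ 2) ^ σ : ℝ) * Real.exp (-‖p - ξ‖ ^ 2 / ℏ) ∧
      (Real.pi * ℏ) ^ (-(3 : ℝ) / 2) *
          ∫ ξ : E3, ((1 + ‖ξ‖ ^ 2) ^ σ : ℝ) * Real.exp (-‖p - ξ‖ ^ 2 / ℏ) ≤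
        C * (1 + ‖p‖ ^ 2) ^ σ := by
  set J : ℝ → ℝ := fun s ↦ ∫ v : E3, (1 + ‖v‖ ^ 2) ^ s * Real.exp (-‖v‖ ^ 2)
  have hJ (s : ℝ) : 0 < J s := integral_one_add_norm_sq_rpow_mul_exp_neg_norm_sq_pos s
  refine ⟨Real.pi ^ (-(3 : ℝ) / 2) * 2 ^ (-|σ|) * J (-|σ|), by have := hJ (-|σ|); positivity,
    Real.pi ^ (-(3 : ℝ) / 2) * 2 ^ |σ| * J |σ|, by have := hJ |σ|; positivity,
    fun ℏ hℏ hℏ1 q p ↦ ⟨integral_weight_mul_norm_integral_coherent_mul_cexp_sq σ hℏ q p, ?_⟩⟩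
  have hsub := integral_mul_exp_neg_norm_sub_sq_div (fun ξ : E3 ↦ (1 + ‖ξ‖ ^ 2) ^ σ) p hℏ
  have hscale : (Real.pi * ℏ) ^ (-(3 : ℝ) / 2) * ℏ ^ ((Module.finrank ℝ E3 : ℝ) / 2)
      = Real.pi ^ (-(3 : ℝ) / 2) := by
    rw [finrank_euclideanSpace_fin, Real.mul_rpow Real.pi_pos.le hℏ.le, mul_assoc,
      ← Real.rpow_add hℏ]
    norm_num
  have hc : ‖√ℏ‖ ≤ 1 := by
    rw [Real.norm_of_nonneg (Real.sqrt_nonneg ℏ)]; exact Real.sqrt_le_one.2 hℏ1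
  simp only [hsub, ← mul_assoc, hscale]
  constructor
  · calc _ = Real.pi ^ (-(3 : ℝ) / 2) * (2 ^ (-|σ|) * (1 + ‖p‖ ^ 2) ^ σ * J (-|σ|)) := by ring
      _ ≤ _ := mul_le_mul_of_nonneg_left
        (le_integral_one_add_norm_add_smul_sq_rpow_mul_exp σ hc p) (by positivity)
  · calc _ ≤ Real.pi ^ (-(3 : ℝ) / 2) * (2 ^ |σ| * (1 + ‖p‖ ^ 2) ^ σ * J |σ|) :=
          mul_le_mul_of_nonneg_left (integral_one_add_norm_add_smul_sq_rpow_mul_exp_le σ hc p)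
            (by positivity)
      _ = _ := by ring
end
end

section
/- Let t ≠ 0 and f₀ : ℝ³×ℝ³ → [0,∞). Then the spatial density of the free transport evolution ρ(t,q) := ∫_{ℝ³} f₀(q - tp, p) dp satisfies the dispersion estimate ‖ρ(t,·)‖_{L^∞(ℝ³)} ≤ min( |t|^{-3} ‖f₀‖_{L¹_q L^∞_p}, ‖f₀‖_{L¹_p L^∞_q} ), where ‖f₀‖_{L¹_q L^∞_p} = ∫_{ℝ³} sup_p f₀(q,p) dq and ‖f₀‖_{L¹_p L^∞_q} = ∫_{ℝ³} sup_q f₀(q,p) dp. -/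
open MeasureTheory
open scoped ENNReal
noncomputable section

section AddHaar

variable {E : Type*} [NormedAddCommGroup E] [NormedSpace ℝ E] [MeasurableSpace E] [BorelSpace E]
  [FiniteDimensional ℝ E] (μ : Measure E) [μ.IsAddHaarMeasure]

theorem lintegral_comp_smul (f : E → ℝ≥0∞) {t : ℝ} (ht : t ≠ 0) :
    ∫⁻ x, f (t • x) ∂μ = ENNReal.ofReal |(t ^ Module.finrank ℝ E)⁻¹| * ∫⁻ x, f x ∂μ := by
  rw [← smul_eq_mul, ← lintegral_smul_measure, ← Measure.map_addHaar_smul μ ht]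
  exact (lintegral_map_equiv f (Homeomorph.smulOfNeZero t ht).toMeasurableEquiv).symm

theorem lintegral_comp_sub_smul (f : E → ℝ≥0∞) (q : E) {t : ℝ} (ht : t ≠ 0) :
    ∫⁻ x, f (q - t • x) ∂μ = ENNReal.ofReal |(t ^ Module.finrank ℝ E)⁻¹| * ∫⁻ x, f x ∂μ := by
  rw [lintegral_comp_smul μ (fun y => f (q - y)) ht, lintegral_sub_left_eq_self]

end AddHaar

theorem transport_dispersion_general (t : ℝ) (ht : t ≠ 0) (f₀ : E3 → E3 → ℝ≥0∞) :
    ∀ q : E3,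
      ((∫⁻ p : E3, f₀ (q - t • p) p) ≤
          ENNReal.ofReal (|t| ^ (-(3 : ℝ))) * ∫⁻ q' : E3, ⨆ p : E3, f₀ q' p) ∧
      ((∫⁻ p : E3, f₀ (q - t • p) p) ≤ ∫⁻ p : E3, ⨆ q' : E3, f₀ q' p) := by
  intro q
  have jacobian : |(t ^ Module.finrank ℝ E3)⁻¹| = |t| ^ (-(3 : ℝ)) := by
    rw [finrank_euclideanSpace_fin, Real.rpow_neg (abs_nonneg t), abs_inv, abs_pow]
    norm_cast
  constructor
  · calc (∫⁻ p : E3, f₀ (q - t • p) p)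
        ≤ ∫⁻ p : E3, ⨆ p' : E3, f₀ (q - t • p) p' := lintegral_mono fun p => le_iSup _ p
      _ = ENNReal.ofReal (|t| ^ (-(3 : ℝ))) * ∫⁻ q' : E3, ⨆ p : E3, f₀ q' p := by
        rw [lintegral_comp_sub_smul volume (fun y => ⨆ p, f₀ y p) q ht, jacobian]
  · exact lintegral_mono fun p => le_iSup (fun q' => f₀ q' p) (q - t • p)

/-- Castella–Perthame dispersion estimate: for `t ≠ 0` and
`f₀ : ℝ³×ℝ³ → [0,∞)`, the density `ρ(t,q) = ∫ f₀(q-tp,p) dp` of the free transport flow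
satisfies `‖ρ(t)‖_{L^∞} ≤ min(|t|^{-3}‖f₀‖_{L¹_q L^∞_p}, ‖f₀‖_{L¹_p L^∞_q})`
(the minimum being stated as both bounds). -/
theorem transport_dispersion (t : ℝ) (ht : t ≠ 0) (f₀ : E3 → E3 → ℝ≥0∞)
    (hm : Measurable (Function.uncurry f₀)) :
    ∀ q : E3,
      ((∫⁻ p : E3, f₀ (q - t • p) p) ≤
          ENNReal.ofReal (|t| ^ (-(3 : ℝ))) * ∫⁻ q' : E3, ⨆ p : E3, f₀ q' p) ∧
      ((∫⁻ p : E3, f₀ (q - t • p) p) ≤ ∫⁻ p : E3, ⨆ q' : E3, f₀ q' p) :=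
  transport_dispersion_general t ht f₀
end
end
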